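/- Let 0 → V' → V → V'' → 0 be an exact sequence of finite projective modules over a commutative ring R, and suppose V' admits a nowhere-vanishing section s : R → V'. Then under the multiplicativity isomorphism λ_{-1}(V^∨) = λ_{-1}(V'^∨) · λ_{-1}(V''^∨) in K_0(R), both λ_{-1}(V^∨) and λ_{-1}(V'^∨) vanish, and the two resulting trivializations of λ_{-1}(V^∨) agree: λ_{-1}(V^∨) = 0 · λ_{-1}(V''^∨) = 0. -/

import Mathlib

open CategoryTheory

/-- The set of relations defining the Grothendieck group `K₀` of finitely generated
projective modules: for every short exact sequence `0 → A → B → C → 0` of finite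
projective modules, we impose `[B] = [A] + [C]`. -/
def K0Rels (R : Type) [CommRing R] : AddSubgroup (FreeAbelianGroup (ModuleCat.{0} R)) :=
  AddSubgroup.closure
    {x | ∃ (A B C : ModuleCat.{0} R),
      Module.Finite R A ∧ Module.Projective R A ∧
      Module.Finite R B ∧ Module.Projective R B ∧
      Module.Finite R C ∧ Module.Projective R C ∧
      ∃ (f : A →ₗ[R] B) (g : B →ₗ[R] C),
        Function.Injective f ∧ Function.Surjective g ∧ Function.Exact f g ∧
        x = FreeAbelianGroup.of B - FreeAbelianGroup.of A - FreeAbelianGroup.of C}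

/-- The Grothendieck group `K₀(R)` of finite projective `R`-modules. -/
def K0 (R : Type) [CommRing R] : Type 1 :=
  FreeAbelianGroup (ModuleCat.{0} R) ⧸ K0Rels R

noncomputable instance (R : Type) [CommRing R] : AddCommGroup (K0 R) :=
  QuotientAddGroup.Quotient.addCommGroup _

/-- The class of a module in `K₀(R)`. -/
def K0.cls (R : Type) [CommRing R] (M : Type) [AddCommGroup M] [Module R M] : K0 R :=
  QuotientAddGroup.mk (FreeAbelianGroup.of (ModuleCat.of R M))

/-!
If `ψ e = 1`, contraction with `ψ` and left multiplication by `e` split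
`⋀^(k+1) M ≃ ⋀^(k+1) W × ⋀^k W` with `W = ker ψ` (a Koszul homotopy). Hence the alternating sum
of the classes `[⋀^k M]`, `k ≤ n`, telescopes to `± [⋀^n W]`, which vanishes as soon as
`⋀^(n+1) M` does. For `V'^∨` take `e = ret` and `ψ` evaluation at `s 1`; for `V^∨` extend `ret`
to `V` along a retraction of `f`, which exists because `V''` is projective.
-/

local infixl:70 "⌋" => CliffordAlgebra.contractLeft

namespace ExteriorAlgebra

variable {R M N : Type*} [CommRing R] [AddCommGroup M] [Module R M] [AddCommGroup N] [Module R N]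

theorem ι_mul_mem_exteriorPower {n : ℕ} (m : M) {x : ExteriorAlgebra R M}
    (hx : x ∈ ⋀[R]^n M) : ι R m * x ∈ ⋀[R]^(n + 1) M := by
  rw [exteriorPower, pow_succ']
  exact Submodule.mul_mem_mul (LinearMap.mem_range_self _ m) hx

theorem contractLeft_mem_exteriorPower (ψ : Module.Dual R M) {n : ℕ} {x : ExteriorAlgebra R M}
    (hx : x ∈ ⋀[R]^(n + 1) M) : ψ⌋x ∈ ⋀[R]^n M := by
  induction n generalizing x with
  | zero =>
    obtain ⟨m, rfl⟩ : x ∈ LinearMap.range (ι R) := by simpa [exteriorPower] using hx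
    rw [CliffordAlgebra.contractLeft_ι, exteriorPower, pow_zero]
    exact Submodule.algebraMap_mem _
  | succ n ih =>
    rw [exteriorPower, pow_succ'] at hx
    induction hx using Submodule.mul_induction_on' with
    | mem_mul_mem a ha y hy =>
      obtain ⟨m, rfl⟩ := ha
      rw [CliffordAlgebra.contractLeft_ι_mul]
      exact sub_mem (Submodule.smul_mem _ _ hy) (ι_mul_mem_exteriorPower m (ih hy))
    | add x _ y _ hx hy => simpa only [map_add] using add_mem hx hy

theorem contractLeft_map_eq_zero (ψ : Module.Dual R M) {u : N →ₗ[R] M} (hu : ψ ∘ₗ u = 0)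
    (x : ExteriorAlgebra R N) : ψ⌋map u x = 0 := by
  induction x using CliffordAlgebra.left_induction with
  | algebraMap r => rw [AlgHom.commutes, CliffordAlgebra.contractLeft_algebraMap]
  | add x y hx hy => rw [map_add, map_add, hx, hy, add_zero]
  | ι_mul x n hx =>
    rw [map_mul, map_apply_ι, CliffordAlgebra.contractLeft_ι_mul, hx, ← LinearMap.comp_apply, hu]
    simp

theorem map_add_ι_mul_map_contractLeft (ψ : Module.Dual R M) (e : M) {j : M →ₗ[R] M}
    (hj : ∀ m, j m + ψ m • e = m) (x : ExteriorAlgebra R M) :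
    map j x + ι R e * map j (ψ⌋x) = x := by
  induction x using CliffordAlgebra.left_induction with
  | algebraMap r => simp [CliffordAlgebra.contractLeft_algebraMap]
  | add x y hx hy =>
    rw [map_add, map_add, map_add, mul_add]
    conv_rhs => rw [← hx, ← hy]
    abel
  | ι_mul x m hx =>
    have he_mul : ι R e * map j x = ι R e * x := by
      conv_rhs => rw [← hx]
      rw [mul_add, ← mul_assoc, ι_sq_zero, zero_mul, add_zero]
    have hanti : ι R e * ι R (j m) = -(ι R (j m) * ι R e) :=
      eq_neg_of_add_eq_zero_left (ι_add_mul_swap e (j m))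
    calc map j (ι R m * x) + ι R e * map j (ψ⌋(ι R m * x))
        = ι R (j m) * (map j x + ι R e * map j (ψ⌋x)) + ψ m • (ι R e * map j x) := by
          rw [CliffordAlgebra.contractLeft_ι_mul, map_mul, map_sub, map_smul, map_mul, map_apply_ι,
            mul_sub, mul_smul_comm, ← mul_assoc (ι R e), hanti, mul_add]
          simp only [neg_mul, mul_assoc]
          abel
      _ = (ι R (j m) + ψ m • ι R e) * x := by rw [hx, he_mul, add_mul, smul_mul_assoc]
      _ = ι R m * x := by rw [← map_smul, ← map_add, hj]

end ExteriorAlgebra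

namespace exteriorPower

open ExteriorAlgebra

variable {R M N : Type*} [CommRing R] [AddCommGroup M] [Module R M] [AddCommGroup N] [Module R N]

theorem coe_map (n : ℕ) (f : M →ₗ[R] N) (x : ⋀[R]^n M) :
    (map n f x : ExteriorAlgebra R N) = ExteriorAlgebra.map f x := by
  have : (⋀[R]^n N).subtype ∘ₗ map n f =
      (ExteriorAlgebra.map f).toLinearMap ∘ₗ (⋀[R]^n M).subtype := by
    apply linearMap_ext
    ext m
    simp [ExteriorAlgebra.map_apply_ιMulti]
  exact LinearMap.congr_fun this x

instance instProjective [Module.Projective R M] (n : ℕ) : Module.Projective R (⋀[R]^n M) := by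
  obtain ⟨s, hs⟩ := Module.projective_def'.mp (inferInstance : Module.Projective R M)
  refine Module.Projective.of_split (map n s) (map n (Finsupp.linearCombination R id)) ?_
  rw [← map_comp, hs, map_id]

noncomputable def contractLeft (ψ : Module.Dual R M) (n : ℕ) : ⋀[R]^(n + 1) M →ₗ[R] ⋀[R]^n M :=
  LinearMap.codRestrict _ (CliffordAlgebra.contractLeft ψ ∘ₗ (⋀[R]^(n + 1) M).subtype)
    fun x => contractLeft_mem_exteriorPower ψ x.2

@[simp] theorem coe_contractLeft (ψ : Module.Dual R M) (n : ℕ) (x : ⋀[R]^(n + 1) M) :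
    (contractLeft ψ n x : ExteriorAlgebra R M) = ψ⌋(x : ExteriorAlgebra R M) := rfl

def ιMul (e : M) (n : ℕ) : ⋀[R]^n M →ₗ[R] ⋀[R]^(n + 1) M :=
  LinearMap.codRestrict _ (LinearMap.mulLeft R (ι R e) ∘ₗ (⋀[R]^n M).subtype)
    fun x => ι_mul_mem_exteriorPower e x.2

@[simp] theorem coe_ιMul (e : M) (n : ℕ) (x : ⋀[R]^n M) :
    (ιMul e n x : ExteriorAlgebra R M) = ι R e * x := rfl

end exteriorPower

namespace Module.Dual

open ExteriorAlgebra

variable {R M : Type*} [CommRing R] [AddCommGroup M] [Module R M]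
  (ψ : Module.Dual R M) {e : M} (he : ψ e = 1)

def kerProj : M →ₗ[R] LinearMap.ker ψ :=
  LinearMap.codRestrict _ (LinearMap.id - ψ.smulRight e) fun m => by simp [he]

theorem coe_kerProj (m : M) : (ψ.kerProj he m : M) = m - ψ m • e := rfl

theorem kerProj_comp_subtype : ψ.kerProj he ∘ₗ (LinearMap.ker ψ).subtype = LinearMap.id := by
  ext w
  simp [coe_kerProj]

theorem kerProj_self : ψ.kerProj he e = 0 := by
  ext
  simp [coe_kerProj, he]

noncomputable def exteriorPowerSuccEquiv (n : ℕ) :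
    ⋀[R]^(n + 1) M ≃ₗ[R] ⋀[R]^(n + 1) (LinearMap.ker ψ) × ⋀[R]^n (LinearMap.ker ψ) :=
  LinearEquiv.ofLinearMap
    ((exteriorPower.map (n + 1) (ψ.kerProj he)).prod
      (exteriorPower.map n (ψ.kerProj he) ∘ₗ exteriorPower.contractLeft ψ n))
    ((exteriorPower.map (n + 1) (LinearMap.ker ψ).subtype).coprod
      (exteriorPower.ιMul e n ∘ₗ exteriorPower.map n (LinearMap.ker ψ).subtype))
    (by
      have hmap (y : ExteriorAlgebra R (LinearMap.ker ψ)) :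
          map (ψ.kerProj he) (map (LinearMap.ker ψ).subtype y) = y := by
        rw [← AlgHom.comp_apply, map_comp_map, kerProj_comp_subtype, map_id, AlgHom.id_apply]
      have hψ : ψ ∘ₗ (LinearMap.ker ψ).subtype = 0 := by
        ext w
        exact w.2
      refine LinearMap.ext fun ⟨a, b⟩ => Prod.ext (Subtype.ext ?_) (Subtype.ext ?_)
      all_goals simp only [LinearMap.comp_apply, LinearMap.coprod_apply, LinearMap.prod_apply,
        LinearMap.id_apply, Function.prod_apply, Submodule.coe_add, exteriorPower.coe_map,
        exteriorPower.coe_contractLeft, exteriorPower.coe_ιMul, map_add, Prod.mk_add_mk]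
      · rw [hmap, map_mul, map_apply_ι, kerProj_self, map_zero, zero_mul, add_zero]
      · rw [contractLeft_map_eq_zero ψ hψ, CliffordAlgebra.contractLeft_ι_mul, he, one_smul,
          contractLeft_map_eq_zero ψ hψ, mul_zero, sub_zero, map_zero, zero_add, hmap])
    (by
      refine LinearMap.ext fun x => Subtype.ext ?_
      simp only [LinearMap.comp_apply, LinearMap.coprod_apply, LinearMap.prod_apply,
        LinearMap.id_apply, Function.prod_apply, exteriorPower.coe_map, exteriorPower.coe_ιMul,
        Submodule.coe_add]
      rw [← AlgHom.comp_apply, ← AlgHom.comp_apply, map_comp_map]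
      exact map_add_ι_mul_map_contractLeft ψ e (fun m => by simp [coe_kerProj]) _)

end Module.Dual

namespace K0

variable {R : Type} [CommRing R] {A B C : Type} [AddCommGroup A] [Module R A] [AddCommGroup B]
  [Module R B] [AddCommGroup C] [Module R C]

theorem cls_eq_add_of_exact [Module.Finite R A] [Module.Projective R A] [Module.Finite R B]
    [Module.Projective R B] [Module.Finite R C] [Module.Projective R C]
    {f : A →ₗ[R] B} {g : B →ₗ[R] C} (hf : Function.Injective f) (hg : Function.Surjective g)
    (hfg : Function.Exact f g) : cls R B = cls R A + cls R C := by
  rw [← sub_eq_zero, sub_add_eq_sub_sub]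
  exact (QuotientAddGroup.eq_zero_iff _).mpr <| AddSubgroup.subset_closure
    ⟨.of R A, .of R B, .of R C, ‹_›, ‹_›, ‹_›, ‹_›, ‹_›, ‹_›, f, g, hf, hg, hfg, rfl⟩

theorem cls_eq_zero_of_subsingleton [Subsingleton A] : cls R A = 0 := by
  have h := cls_eq_add_of_exact (R := R) (f := (0 : A →ₗ[R] A)) (g := 0)
    (fun a b _ => Subsingleton.elim a b) (fun a => ⟨a, Subsingleton.elim _ _⟩)
    (fun a => ⟨fun _ => ⟨a, Subsingleton.elim _ _⟩, fun _ => Subsingleton.elim _ _⟩)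
  exact left_eq_add.mp h

theorem cls_congr [Module.Finite R A] [Module.Projective R A] (e : A ≃ₗ[R] B) :
    cls R A = cls R B := by
  have : Module.Finite R B := .equiv e
  have : Module.Projective R B := .of_equiv e
  rw [cls_eq_add_of_exact (f := (0 : PUnit →ₗ[R] A)) (g := e.toLinearMap)
    (fun a b _ => Subsingleton.elim a b) e.surjective (fun a => by simp [eq_comm (a := a)]),
    cls_eq_zero_of_subsingleton, zero_add]

theorem cls_prod [Module.Finite R A] [Module.Projective R A] [Module.Finite R C]
    [Module.Projective R C] : cls R (A × C) = cls R A + cls R C :=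
  cls_eq_add_of_exact LinearMap.inl_injective LinearMap.snd_surjective Function.Exact.inl_snd

/-- `λ₋₁(M)` truncated after degree `n`; it is the full sum once `⋀^i M = 0` for `i > n`. -/
noncomputable def lambdaMinusOne (R : Type) [CommRing R] (M : Type) [AddCommGroup M] [Module R M]
    (n : ℕ) : K0 R :=
  ∑ i ∈ Finset.range (n + 1), (-1 : ℤ) ^ i • cls R (⋀[R]^i M)

variable {M : Type} [AddCommGroup M] [Module R M] [Module.Finite R M] [Module.Projective R M]
  (ψ : Module.Dual R M) {e : M}

theorem lambdaMinusOne_eq_zsmul_cls_ker (he : ψ e = 1) (n : ℕ) :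
    lambdaMinusOne R M n = (-1 : ℤ) ^ n • cls R (⋀[R]^n (LinearMap.ker ψ)) := by
  have : Module.Finite R (LinearMap.ker ψ) :=
    .of_surjective (ψ.kerProj he) fun w => ⟨w, LinearMap.congr_fun (ψ.kerProj_comp_subtype he) w⟩
  have : Module.Projective R (LinearMap.ker ψ) :=
    .of_split _ _ (ψ.kerProj_comp_subtype he)
  induction n with
  | zero =>
    simpa [lambdaMinusOne] using
      cls_congr ((exteriorPower.zeroEquiv R M).trans (exteriorPower.zeroEquiv R _).symm)
  | succ n ih =>
    rw [lambdaMinusOne, Finset.sum_range_succ, ← lambdaMinusOne, ih,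
      cls_congr (ψ.exteriorPowerSuccEquiv he n), cls_prod, pow_succ, smul_add, mul_neg_one,
      neg_smul, neg_smul]
    abel

theorem lambdaMinusOne_eq_zero (he : ψ e = 1) (n : ℕ) [Subsingleton (⋀[R]^(n + 1) M)] :
    lambdaMinusOne R M n = 0 := by
  have : Subsingleton (⋀[R]^n (LinearMap.ker ψ)) :=
    (Prod.snd_surjective.comp (ψ.exteriorPowerSuccEquiv he n).surjective).subsingleton
  rw [lambdaMinusOne_eq_zsmul_cls_ker ψ he, cls_eq_zero_of_subsingleton, smul_zero]

end K0

open Finset in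
theorem lambdaMinusOne_trivializations_interchange_general
    (R : Type) [CommRing R]
    (V' V V'' : Type) [AddCommGroup V'] [AddCommGroup V] [AddCommGroup V'']
    [Module R V'] [Module R V] [Module R V'']
    [Module.Projective R V'] [Module.Finite R V']
    [Module.Projective R V] [Module.Finite R V]
    [Module.Projective R V'']
    (f : V' →ₗ[R] V) (g : V →ₗ[R] V'')
    (hf : Function.Injective f) (hg : Function.Surjective g) (hfg : Function.Exact f g)
    (s : R →ₗ[R] V') (ret : V' →ₗ[R] R) (hs : ret ∘ₗ s = LinearMap.id)
    (n : ℕ)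
    (hnV : ∀ i, n < i → Subsingleton ↥(⋀[R]^i (Module.Dual R V)))
    (hnV' : ∀ i, n < i → Subsingleton ↥(⋀[R]^i (Module.Dual R V'))) :
    (∑ i ∈ range (n + 1), ((-1 : ℤ) ^ i) • K0.cls R ↥(⋀[R]^i (Module.Dual R V)) = 0) ∧
    (∑ i ∈ range (n + 1), ((-1 : ℤ) ^ i) • K0.cls R ↥(⋀[R]^i (Module.Dual R V')) = 0) := by
  have hret : ret (s 1) = 1 := LinearMap.congr_fun hs 1
  obtain ⟨l, hl⟩ : ∃ l : V →ₗ[R] V', l ∘ₗ f = LinearMap.id :=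
    ((hfg.split_tfae hf hg).out 0 1).mp (Module.projective_lifting_property g .id hg)
  have := hnV (n + 1) n.lt_succ_self
  have := hnV' (n + 1) n.lt_succ_self
  refine ⟨K0.lambdaMinusOne_eq_zero (Module.Dual.eval R V (f (s 1))) (e := ret ∘ₗ l) ?_ n,
    K0.lambdaMinusOne_eq_zero (Module.Dual.eval R V' (s 1)) hret n⟩
  rw [Module.Dual.eval_apply, LinearMap.comp_apply]
  exact (congrArg ret (LinearMap.congr_fun hl (s 1))).trans hret

open Finset in
/-- **Compatibility of the Koszul trivializations.**
Let `0 → V' → V → V'' → 0` be an exact sequence of finite projective modules over a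
commutative ring `R`, and suppose that `V'` admits a nowhere-vanishing section
`s : R → V'` (i.e. `s` admits a retraction, so `R` splits off `V'`).  Then, under the
multiplicativity `λ₋₁(V^∨) = λ₋₁(V'^∨) · λ₋₁(V''^∨)` in `K₀(R)`, both `λ₋₁(V^∨)` and
`λ₋₁(V'^∨)` vanish, and the two resulting trivializations of `λ₋₁(V^∨)` agree:
`λ₋₁(V^∨) = 0 · λ₋₁(V''^∨) = 0`.  (The exponent bound `n` is any bound beyond which
the exterior powers of the relevant duals vanish.) -/
theorem lambdaMinusOne_trivializations_interchange
    (R : Type) [CommRing R]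
    (V' V V'' : Type) [AddCommGroup V'] [AddCommGroup V] [AddCommGroup V'']
    [Module R V'] [Module R V] [Module R V'']
    [Module.Projective R V'] [Module.Finite R V']
    [Module.Projective R V] [Module.Finite R V]
    [Module.Projective R V''] [Module.Finite R V'']
    (f : V' →ₗ[R] V) (g : V →ₗ[R] V'')
    (hf : Function.Injective f) (hg : Function.Surjective g) (hfg : Function.Exact f g)
    (s : R →ₗ[R] V') (ret : V' →ₗ[R] R) (hs : ret ∘ₗ s = LinearMap.id)
    (n : ℕ)
    (hnV : ∀ i, n < i → Subsingleton ↥(⋀[R]^i (Module.Dual R V)))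
    (hnV' : ∀ i, n < i → Subsingleton ↥(⋀[R]^i (Module.Dual R V'))) :
    (∑ i ∈ range (n + 1), ((-1 : ℤ) ^ i) • K0.cls R ↥(⋀[R]^i (Module.Dual R V)) = 0) ∧
    (∑ i ∈ range (n + 1), ((-1 : ℤ) ^ i) • K0.cls R ↥(⋀[R]^i (Module.Dual R V')) = 0) :=
  lambdaMinusOne_trivializations_interchange_general R V' V V'' f g hf hg hfg s ret hs n hnV hnV'
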